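/- Let k ≥ 1 and let α₀,α₁,α₂, β₀,β₁,β₂, γ₀,γ₁,γ₂ be nonnegative integers with α₀+α₁+α₂ = β₀+β₁+β₂ = γ₀+γ₁+γ₂ = k, and suppose 3 divides (α₀+β₀+γ₀) − (α₁+β₁+γ₁); set A = ((α₀+β₀+γ₀) − (α₁+β₁+γ₁))/3, C = max(0, A − β₀ + γ₁, 2A + α₁ − β₀ + γ₁ − γ₀), D = max(−A, 0, A + α₁ − β₀ − β₂ + γ₁), E = min(A + α₁ − β₀ + γ₁, α₀ − A, γ₁). Let 𝒦 be the set of 3×3 matrices [k_{ij}] (0 ≤ i,j ≤ 2) of nonnegative integers with row sums k_{i0}+k_{i1}+k_{i2} = γ_i, column sums k_{0j}+k_{1j}+k_{2j} = α_j, and wrapped antidiagonal sums k₀₀+k₁₂+k₂₁ = β₀, k₀₂+k₁₁+k₂₀ = β₁, k₀₁+k₁₀+k₂₂ = β₂. Then every K ∈ 𝒦 satisfies k₀₀ = k₁₁ + A and k₀₁ = A + α₁ − β₀ + γ₁ − k₁₀ − k₁₁, and the map K ↦ (k₁₀, k₁₁) is a bijection from 𝒦 onto the set of integer points {(s,t)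 ∈ ℤ² : C ≤ s, D ≤ t, s + t ≤ E}. -/
import Mathlib


/-- The set of 3×3 matrices of nonnegative integers with prescribed row sums `γ_i`,
column sums `α_j`, and wrapped antidiagonal sums `β_0, β_1, β_2`. -/
def Kset (α0 α1 α2 β0 β1 β2 γ0 γ1 γ2 : ℕ) : Set (Fin 3 → Fin 3 → ℕ) :=
  {K | (K 0 0 + K 0 1 + K 0 2 = γ0 ∧ K 1 0 + K 1 1 + K 1 2 = γ1 ∧
          K 2 0 + K 2 1 + K 2 2 = γ2) ∧
       (K 0 0 + K 1 0 + K 2 0 = α0 ∧ K 0 1 + K 1 1 + K 2 1 = α1 ∧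
          K 0 2 + K 1 2 + K 2 2 = α2) ∧
       (K 0 0 + K 1 2 + K 2 1 = β0 ∧ K 0 2 + K 1 1 + K 2 0 = β1 ∧
          K 0 1 + K 1 0 + K 2 2 = β2)}

private def mkK (a b c d e f g h i : ℕ) : Fin 3 → Fin 3 → ℕ :=
  fun x y =>
    match x, y with
    | 0, 0 => a | 0, 1 => b | 0, 2 => c
    | 1, 0 => d | 1, 1 => e | 1, 2 => f
    | 2, 0 => g | 2, 1 => h | 2, 2 => i

private theorem mkK00 (a b c d e f g h i : ℕ) : mkK a b c d e f g h i 0 0 = a := rfl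
private theorem mkK01 (a b c d e f g h i : ℕ) : mkK a b c d e f g h i 0 1 = b := rfl
private theorem mkK02 (a b c d e f g h i : ℕ) : mkK a b c d e f g h i 0 2 = c := rfl
private theorem mkK10 (a b c d e f g h i : ℕ) : mkK a b c d e f g h i 1 0 = d := rfl
private theorem mkK11 (a b c d e f g h i : ℕ) : mkK a b c d e f g h i 1 1 = e := rfl
private theorem mkK12 (a b c d e f g h i : ℕ) : mkK a b c d e f g h i 1 2 = f := rfl
private theorem mkK20 (a b c d e f g h i : ℕ) : mkK a b c d e f g h i 2 0 = g := rfl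
private theorem mkK21 (a b c d e f g h i : ℕ) : mkK a b c d e f g h i 2 1 = h := rfl
private theorem mkK22 (a b c d e f g h i : ℕ) : mkK a b c d e f g h i 2 2 = i := rfl

set_option maxHeartbeats 1600000 in
theorem rank3_matrix_set_bijection_with_triangle (k : ℕ) (hk : 1 ≤ k)
    (α0 α1 α2 β0 β1 β2 γ0 γ1 γ2 : ℕ)
    (hα : α0 + α1 + α2 = k) (hβ : β0 + β1 + β2 = k) (hγ : γ0 + γ1 + γ2 = k)
    (A : ℤ) (hA : 3 * A = ((α0 : ℤ) + β0 + γ0) - ((α1 : ℤ) + β1 + γ1))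
    (C D E : ℤ)
    (hC : C = max 0 (max (A - β0 + γ1) (2 * A + α1 - β0 + γ1 - γ0)))
    (hD : D = max (-A) (max 0 (A + α1 - β0 - β2 + γ1)))
    (hE : E = min (A + α1 - β0 + γ1) (min ((α0 : ℤ) - A) (γ1 : ℤ))) :
    (∀ K ∈ Kset α0 α1 α2 β0 β1 β2 γ0 γ1 γ2,
        (K 0 0 : ℤ) = (K 1 1 : ℤ) + A ∧
        (K 0 1 : ℤ) = A + α1 - β0 + γ1 - (K 1 0 : ℤ) - (K 1 1 : ℤ)) ∧
    Set.BijOn (fun K : Fin 3 → Fin 3 → ℕ => ((K 1 0 : ℤ), (K 1 1 : ℤ)))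
      (Kset α0 α1 α2 β0 β1 β2 γ0 γ1 γ2)
      {p : ℤ × ℤ | C ≤ p.1 ∧ D ≤ p.2 ∧ p.1 + p.2 ≤ E} := by
  subst hC hD hE
  constructor
  · rintro K ⟨⟨hg0, hg1, hg2⟩, ⟨ha0, ha1, ha2⟩, ⟨hb0, hb1, hb2⟩⟩
    constructor <;> omega
  refine ⟨?_, ?_, ?_⟩
  · rintro K ⟨⟨hg0, hg1, hg2⟩, ⟨ha0, ha1, ha2⟩, ⟨hb0, hb1, hb2⟩⟩
    simp only [Set.mem_setOf_eq, max_le_iff, le_min_iff]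
    refine ⟨⟨?_, ?_, ?_⟩, ⟨?_, ?_, ?_⟩, ?_, ?_, ?_⟩ <;> omega
  · rintro K ⟨⟨hg0, hg1, hg2⟩, ⟨ha0, ha1, ha2⟩, ⟨hb0, hb1, hb2⟩⟩
      K' ⟨⟨hg0', hg1', hg2'⟩, ⟨ha0', ha1', ha2'⟩, ⟨hb0', hb1', hb2'⟩⟩ hKK
    simp only [Prod.mk.injEq] at hKK
    obtain ⟨h1, h2⟩ := hKK
    have e00 : K 0 0 = K' 0 0 := by omega
    have e01 : K 0 1 = K' 0 1 := by omega
    have e02 : K 0 2 = K' 0 2 := by omega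
    have e10 : K 1 0 = K' 1 0 := by omega
    have e11 : K 1 1 = K' 1 1 := by omega
    have e12 : K 1 2 = K' 1 2 := by omega
    have e20 : K 2 0 = K' 2 0 := by omega
    have e21 : K 2 1 = K' 2 1 := by omega
    have e22 : K 2 2 = K' 2 2 := by omega
    funext i j
    fin_cases i <;> fin_cases j <;>
      first
      | exact e00 | exact e01 | exact e02
      | exact e10 | exact e11 | exact e12
      | exact e20 | exact e21 | exact e22
  · rintro ⟨s, t⟩ ⟨h1, h2, h3⟩
    simp only [Set.mem_setOf_eq, max_le_iff, le_min_iff] at h1 h2 h3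
    refine ⟨mkK (t + A).toNat (A + α1 - β0 + γ1 - s - t).toNat
        (γ0 - 2 * A - α1 + β0 - γ1 + s).toNat s.toNat t.toNat (γ1 - s - t).toNat
        (α0 - A - s - t).toNat (-A + β0 - γ1 + s).toNat
        (α2 - γ0 + 2 * A + α1 - β0 + t).toNat,
      ⟨⟨?_, ?_, ?_⟩, ⟨?_, ?_, ?_⟩, ?_, ?_, ?_⟩, ?_⟩
    all_goals simp only [mkK00, mkK01, mkK02, mkK10, mkK11, mkK12, mkK20, mkK21, mkK22,
      Prod.mk.injEq]
    all_goals omega
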